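/- arXiv:1401.3297 — 2 statements merged into one kernel-verified Lean document; each statement's English description precedes it below -/
import Mathlib

section
/- For every α ∈ (2/3, 1) there exists λ > 0 such that ∑_{i=1}^∞ e^{λ·i} · q₋ᵢ(α) < ∞; that is, the step distribution q of the peeling process has exponential tails in the hyperbolic regime. -/
/-!
Writing `r = 2/α - 2`, the weight `q₋₍ₙ₊₁₎(α)` is `catalan n / 4ⁿ · ((3α-2)(n+1)+1)/(n+2) · rⁿ⁺¹/2`.
For `2/3 ≤ α ≤ 1` the first two factors lie in `[0, 1]` (as `catalan n ≤ centralBinom n ≤ 4ⁿ`),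
so `q₋ᵢ(α) = O(rⁱ)`; in the hyperbolic regime `0 < r < 1`, and any `λ` with `e^λ r < 1` works.
-/

/-- The peeling step weight `q₋ᵢ(α)` for `i ≥ 1`. -/
noncomputable def qneg (α : ℝ) (i : ℕ) : ℝ :=
  2 / 4 ^ i *
    ((Nat.factorial (2 * i - 2) : ℝ) /
      ((Nat.factorial (i - 1) : ℝ) * (Nat.factorial (i + 1) : ℝ))) *
    (2 / α - 2) ^ i * ((3 * α - 2) * i + 1)

open Nat Asymptotics Filter

theorem Nat.catalan_le_four_pow (n : ℕ) : catalan n ≤ 4 ^ n :=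
  calc catalan n ≤ (n + 1) * catalan n := Nat.le_mul_of_pos_left _ n.succ_pos
    _ = centralBinom n := succ_mul_catalan_eq_centralBinom n
    _ ≤ 4 ^ n := centralBinom_le_four_pow n

theorem Nat.factorial_two_mul_div_eq_catalan (n : ℕ) :
    ((2 * n)! : ℝ) / (n ! * (n + 2)!) = catalan n / (n + 2) := by
  have hcentral : ((2 * n)! : ℝ) = centralBinom n * n ! * n ! := by
    rw [centralBinom_eq_two_mul_choose]
    exact_mod_cast (choose_mul_factorial_mul_factorial (by omega : n ≤ 2 * n)).symm.trans
      (by rw [show 2 * n - n = n by omega])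
  have hcatalan : (centralBinom n : ℝ) = (n + 1) * catalan n := by
    exact_mod_cast (succ_mul_catalan_eq_centralBinom n).symm
  rw [hcentral, hcatalan, factorial_succ, factorial_succ]
  push_cast
  field_simp
  ring

theorem qneg_succ_eq (α : ℝ) (n : ℕ) :
    qneg α (n + 1) = catalan n / 4 ^ n * (((3 * α - 2) * (n + 1) + 1) / (n + 2)) *
      ((2 / α - 2) ^ (n + 1) / 2) := by
  rw [qneg, show 2 * (n + 1) - 2 = 2 * n by omega, add_tsub_cancel_right,
    factorial_two_mul_div_eq_catalan]
  push_cast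
  field_simp
  ring

theorem two_div_sub_two_nonneg {α : ℝ} (hα₀ : 0 < α) (hα₁ : α ≤ 1) : 0 ≤ 2 / α - 2 := by
  rw [sub_nonneg, le_div_iff₀ hα₀]; linarith

theorem qneg_succ_mem_Icc {α : ℝ} (hα₀ : 2 / 3 ≤ α) (hα₁ : α ≤ 1) (n : ℕ) :
    qneg α (n + 1) ∈ Set.Icc 0 ((2 / α - 2) ^ (n + 1) / 2) := by
  have hr := two_div_sub_two_nonneg (by linarith) hα₁
  have hcatalan : (catalan n : ℝ) / 4 ^ n ∈ Set.Icc 0 1 :=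
    ⟨by positivity, div_le_one_of_le₀ (by exact_mod_cast catalan_le_four_pow n) (by positivity)⟩
  have hlinear : ((3 * α - 2) * (n + 1) + 1) / (n + 2) ∈ Set.Icc (0 : ℝ) 1 := by
    have hn : (0 : ℝ) ≤ n := n.cast_nonneg
    exact ⟨div_nonneg (by nlinarith) (by positivity),
      div_le_one_of_le₀ (by nlinarith) (by positivity)⟩
  rw [qneg_succ_eq]
  exact ⟨by have := hcatalan.1; have := hlinear.1; positivity,
    mul_le_of_le_one_left (by positivity) (mul_le_one₀ hcatalan.2 hlinear.1 hlinear.2)⟩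

theorem qneg_isBigO {α : ℝ} (hα₀ : 2 / 3 ≤ α) (hα₁ : α ≤ 1) :
    qneg α =O[atTop] fun n => (2 / α - 2) ^ n := by
  refine IsBigO.of_bound (1 / 2) (eventually_atTop.2 ⟨1, fun n hn => ?_⟩)
  obtain ⟨m, rfl⟩ := Nat.exists_eq_add_of_le' hn
  obtain ⟨h0, h1⟩ := qneg_succ_mem_Icc hα₀ hα₁ m
  rw [Real.norm_of_nonneg h0, Real.norm_of_nonneg (by linarith)]
  linarith

theorem exists_pos_summable_exp_mul_of_isBigO_pow {f : ℕ → ℝ} {r : ℝ} (hr₀ : 0 ≤ r)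
    (hr₁ : r < 1) (hf : f =O[atTop] fun n => r ^ n) :
    ∃ l : ℝ, 0 < l ∧ Summable fun n : ℕ => Real.exp (l * n) * f n := by
  set ρ : ℝ := 2 / (1 + r)
  have hρ : 1 < ρ := by rw [lt_div_iff₀ (by linarith)]; linarith
  refine ⟨Real.log ρ, Real.log_pos hρ, summable_of_isBigO_nat
    (summable_geometric_of_lt_one (by positivity) (?_ : ρ * r < 1)) ?_⟩
  · rw [div_mul_eq_mul_div, div_lt_one (by linarith)]; linarith
  · have hexp : ∀ n : ℕ, Real.exp (Real.log ρ * n) = ρ ^ n := fun n => by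
      rw [mul_comm, Real.exp_nat_mul, Real.exp_log (by linarith)]
    simpa only [hexp, mul_pow] using (isBigO_refl (fun n : ℕ => ρ ^ n) atTop).mul hf

/-- In the hyperbolic regime `α ∈ (2/3, 1)` the step distribution of the peeling
process has exponential tails: there is `λ > 0` with `∑_{i≥1} e^{λ i} q₋ᵢ(α) < ∞`. -/
theorem qneg_exponential_tails (α : ℝ) (hα : α ∈ Set.Ioo (2/3 : ℝ) 1) :
    ∃ l : ℝ, 0 < l ∧
      Summable (fun i : ℕ => Real.exp (l * ((i + 1 : ℕ) : ℝ)) * qneg α (i + 1)) := by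
  obtain ⟨hα₀, hα₁⟩ := hα
  have hr₀ := two_div_sub_two_nonneg (by linarith) hα₁.le
  have hr₁ : 2 / α - 2 < 1 := by
    rw [sub_lt_iff_lt_add, div_lt_iff₀ (by linarith)]; linarith
  obtain ⟨l, hl, hsum⟩ :=
    exists_pos_summable_exp_mul_of_isBigO_pow hr₀ hr₁ (qneg_isBigO hα₀.le hα₁.le)
  exact ⟨l, hl, (summable_nat_add_iff 1).mpr hsum⟩
end

section
/- For every α ∈ [2/3, 1) there exists a unique real sequence (c_p)_{p≥0} such that c_0 = c_1 = 0, c_3 = α^{−3}, and c_p = α·c_{p+1} + ∑_{i=1}^{p−2} q₋ᵢ(α)·c_{p−i} for every p ≥ 2. Moreover this sequence satisfies c_2 = α·c_3 and is strictly increasing on {2, 3, 4, …}; in particular c_p > 0 for every p ≥ 2. -/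
/-- The defining conditions of the rescaled constants `c_p = β^p C_p^{(κ)}`:
`c₀ = c₁ = 0`, `c₃ = α⁻³`, and the harmonicity recursion
`c_p = α c_{p+1} + ∑_{i=1}^{p−2} q₋ᵢ(α) c_{p−i}` for every `p ≥ 2`. -/
def IsHarmonicSeq (α : ℝ) (c : ℕ → ℝ) : Prop :=
  c 0 = 0 ∧ c 1 = 0 ∧ c 3 = α⁻¹ ^ 3 ∧
    ∀ p : ℕ, 2 ≤ p →
      c p = α * c (p + 1) + ∑ i ∈ Finset.Icc 1 (p - 2), qneg α i * c (p - i)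

open Nat Finset

theorem catalan_mul_factorial_mul_factorial_succ (n : ℕ) :
    catalan n * n ! * (n + 1)! = (2 * n)! := by
  have h := choose_mul_factorial_mul_factorial (show n ≤ 2 * n by omega)
  rw [show 2 * n - n = n by omega, ← centralBinom_eq_two_mul_choose,
    ← succ_mul_catalan_eq_centralBinom] at h
  rw [← h, factorial_succ]
  ring

theorem succ_succ_mul_catalan_succ (n : ℕ) :
    (n + 2) * catalan (n + 1) = 2 * (2 * n + 1) * catalan n := by
  have h := succ_mul_centralBinom_succ n
  rw [← succ_mul_catalan_eq_centralBinom, ← succ_mul_catalan_eq_centralBinom] at h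
  apply Nat.eq_of_mul_eq_mul_left (succ_pos n)
  linarith

theorem qneg_succ {α : ℝ} (hα : α ≠ 0) (n : ℕ) :
    qneg α (n + 1) = (1 - α) * catalan n * ((1 - α) / (2 * α)) ^ n -
      (1 - α) * catalan (n + 1) * ((1 - α) / (2 * α)) ^ (n + 1) := by
  have hfac : ((2 * n)! : ℝ) = catalan n * n ! * (n + 1)! := by
    exact_mod_cast (catalan_mul_factorial_mul_factorial_succ n).symm
  have hcat : (catalan (n + 1) : ℝ) = 2 * (2 * n + 1) * catalan n / (n + 2) := by
    rw [eq_div_iff (by positivity)]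
    exact_mod_cast (mul_comm _ _).trans (succ_succ_mul_catalan_succ n)
  have h4x : 2 / α - 2 = 4 * ((1 - α) / (2 * α)) := by field_simp; ring
  rw [qneg, show 2 * (n + 1) - 2 = 2 * n by omega, Nat.add_sub_cancel, hfac, hcat,
    factorial_succ (n + 1), h4x, mul_pow, div_pow, div_pow]
  push_cast
  field_simp
  ring

theorem sum_qneg_Icc {α : ℝ} (hα : α ≠ 0) (n : ℕ) :
    ∑ i ∈ Icc 1 n, qneg α i = (1 - α) - (1 - α) * catalan n * ((1 - α) / (2 * α)) ^ n := by
  induction n with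
  | zero => simp
  | succ n ih =>
    rw [sum_Icc_succ_top (by omega), ih, qneg_succ hα n]
    ring

theorem sum_qneg_Icc_le {α : ℝ} (hα₀ : 0 < α) (hα₁ : α ≤ 1) (n : ℕ) :
    ∑ i ∈ Icc 1 n, qneg α i ≤ 1 - α := by
  have h : 0 ≤ 1 - α := sub_nonneg.2 hα₁
  have : 0 ≤ (1 - α) * catalan n * ((1 - α) / (2 * α)) ^ n := by positivity
  rw [sum_qneg_Icc hα₀.ne']
  linarith

theorem qneg_pos {α : ℝ} (hα : α ∈ Set.Ico (2 / 3 : ℝ) 1) (i : ℕ) : 0 < qneg α i := by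
  obtain ⟨h₁, h₂⟩ := hα
  have : 0 < 2 / α - 2 := by rw [sub_pos, lt_div_iff₀ (by linarith)]; linarith
  have : 0 ≤ 3 * α - 2 := by linarith
  unfold qneg
  positivity

noncomputable def harmonicSeq (α : ℝ) : ℕ → ℝ
  | 0 => 0
  | 1 => 0
  | 2 => α⁻¹ ^ 2
  | p + 3 =>
    (harmonicSeq α (p + 2) - ∑ i ∈ Icc 1 p, qneg α i * harmonicSeq α (p + 2 - i)) / α

theorem isHarmonicSeq_harmonicSeq {α : ℝ} (hα : α ≠ 0) : IsHarmonicSeq α (harmonicSeq α) := by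
  refine ⟨by rw [harmonicSeq], by rw [harmonicSeq], ?_, fun p hp => ?_⟩
  · simp [harmonicSeq, field]
  · obtain ⟨p, rfl⟩ := Nat.exists_eq_add_of_le' hp
    rw [harmonicSeq, mul_div_cancel₀ _ hα, Nat.add_sub_cancel]
    ring

namespace IsHarmonicSeq

variable {α : ℝ} {c : ℕ → ℝ}

theorem two_eq (hc : IsHarmonicSeq α c) : c 2 = α * c 3 := by
  simpa using hc.2.2.2 2 le_rfl

theorem succ_eq (hα : α ≠ 0) (hc : IsHarmonicSeq α c) {p : ℕ} (hp : 2 ≤ p) :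
    c (p + 1) = (c p - ∑ i ∈ Icc 1 (p - 2), qneg α i * c (p - i)) / α := by
  rw [hc.2.2.2 p hp]
  field_simp
  ring

theorem unique (hα : α ≠ 0) {c' : ℕ → ℝ} (hc : IsHarmonicSeq α c)
    (hc' : IsHarmonicSeq α c') : c = c' := by
  funext n
  induction n using Nat.strong_induction_on with
  | _ n ih =>
    match n, ih with
    | 0, _ => exact hc.1.trans hc'.1.symm
    | 1, _ => exact hc.2.1.trans hc'.2.1.symm
    | 2, _ => rw [hc.two_eq, hc'.two_eq, hc.2.2.1, hc'.2.2.1]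
    | 3, _ => exact hc.2.2.1.trans hc'.2.2.1.symm
    | p + 4, ih =>
      rw [hc.succ_eq hα (by omega : 2 ≤ p + 3), hc'.succ_eq hα (by omega : 2 ≤ p + 3),
        ih (p + 3) (by omega)]
      congr 2
      refine sum_congr rfl fun i hi => ?_
      rw [ih _ (by omega)]

theorem three_pos (hα : 0 < α) (hc : IsHarmonicSeq α c) : 0 < c 3 := by
  rw [hc.2.2.1]
  positivity

theorem two_pos (hα : 0 < α) (hc : IsHarmonicSeq α c) : 0 < c 2 := by
  rw [hc.two_eq]
  exact mul_pos hα (hc.three_pos hα)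

theorem lt_succ (hα : α ∈ Set.Ico (2 / 3 : ℝ) 1) (hc : IsHarmonicSeq α c) {p : ℕ} (hp : 3 ≤ p)
    (hlt : ∀ j, 2 ≤ j → j < p → c j < c p) : c p < c (p + 1) := by
  have hα₀ : 0 < α := by linarith [hα.1]
  have hcp : 0 < c p := (hc.two_pos hα₀).trans (hlt 2 le_rfl (by omega))
  have hsum : ∑ i ∈ Icc 1 (p - 2), qneg α i * c (p - i) < (1 - α) * c p :=
    calc ∑ i ∈ Icc 1 (p - 2), qneg α i * c (p - i)
        < ∑ i ∈ Icc 1 (p - 2), qneg α i * c p :=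
          sum_lt_sum_of_nonempty ⟨1, mem_Icc.2 ⟨le_rfl, by omega⟩⟩ fun i hi => by
            rw [mem_Icc] at hi
            exact mul_lt_mul_of_pos_left (hlt _ (by omega) (by omega)) (qneg_pos hα i)
      _ = (∑ i ∈ Icc 1 (p - 2), qneg α i) * c p := (sum_mul ..).symm
      _ ≤ (1 - α) * c p := mul_le_mul_of_nonneg_right (sum_qneg_Icc_le hα₀ hα.2.le _) hcp.le
  have hrec := hc.2.2.2 p (by omega)
  exact lt_of_mul_lt_mul_left (by linarith) hα₀.le

theorem strictMonoOn (hα : α ∈ Set.Ico (2 / 3 : ℝ) 1) (hc : IsHarmonicSeq α c) :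
    StrictMonoOn c (Set.Ici 2) := by
  have key : ∀ p, 3 ≤ p → ∀ j, 2 ≤ j → j < p → c j < c p := by
    intro p hp
    induction p, hp using Nat.le_induction with
    | base =>
      intro j hj₂ hj₃
      obtain rfl : j = 2 := by omega
      rw [hc.two_eq]
      exact mul_lt_of_lt_one_left (hc.three_pos (by linarith [hα.1])) hα.2
    | succ p hp ih =>
      intro j hj hjp
      have hstep := hc.lt_succ hα hp ih
      rcases (show j < p ∨ j = p by omega) with hj' | rfl
      · exact (ih j hj hj').trans hstep
      · exact hstep
  intro a ha b hb hab
  exact key b (by simp only [Set.mem_Ici] at ha; omega) a ha hab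

theorem pos (hα : α ∈ Set.Ico (2 / 3 : ℝ) 1) (hc : IsHarmonicSeq α c) {p : ℕ} (hp : 2 ≤ p) :
    0 < c p :=
  (hc.two_pos (by linarith [hα.1])).trans_le
    ((hc.strictMonoOn hα).monotoneOn Set.self_mem_Ici hp hp)

end IsHarmonicSeq

/-- For `α ∈ [2/3, 1)` there is a unique sequence `(c_p)` with `c₀ = c₁ = 0`,
`c₃ = α⁻³` satisfying the harmonicity recursion; moreover it satisfies
`c₂ = α c₃`, is strictly increasing on `{2, 3, 4, …}`, and `c_p > 0` for `p ≥ 2`. -/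
theorem harmonic_sequence_exists_unique (α : ℝ) (hα : α ∈ Set.Ico (2/3 : ℝ) 1) :
    (∃! c : ℕ → ℝ, IsHarmonicSeq α c) ∧
    ∀ c : ℕ → ℝ, IsHarmonicSeq α c →
      c 2 = α * c 3 ∧ StrictMonoOn c (Set.Ici 2) ∧ ∀ p : ℕ, 2 ≤ p → 0 < c p := by
  have hα₀ : α ≠ 0 := (show 0 < α by linarith [hα.1]).ne'
  exact ⟨⟨harmonicSeq α, isHarmonicSeq_harmonicSeq hα₀,
      fun c hc => hc.unique hα₀ (isHarmonicSeq_harmonicSeq hα₀)⟩,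
    fun c hc => ⟨hc.two_eq, hc.strictMonoOn hα, fun p hp => hc.pos hα hp⟩⟩
end
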